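/- Let ζ ∈ ℂ be a primitive m-th root of unity and let m₁,…,m_n be natural numbers such that (ζ; m₁,…,m_n) is generic. Let I be a nonempty subset of {1,…,n} and let N be a positive integer with N ≡ −1 (mod m). Then ∑_{k=1}^{N} ∏_{s∈I} (ζ^{k m_s} + ζ^{−k m_s}) = −2^{|I|}. -/

import Mathlib

/-! Writing `x_s = ζ ^ m_s`, each factor is `x_s ^ k + (x_s⁻¹) ^ k`, so expanding the product gives
`∑_{S ⊆ I} w_S ^ k` with `w_S = ∏_{s ∈ S} x_s * ∏_{s ∈ I \ S} x_s⁻¹`. Genericity for `J = S`, `L = I \ S` gives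
`w_S ≠ 1`, while `w_S ^ m = 1` and `m ∣ N + 1`; hence `∑_{k=1}^N w_S ^ k = -1` for each of the
`2 ^ |I|` subsets `S`. -/

/-- `(ζ; m₁, …, m_n)` is generic: for all disjoint subsets `J`, `L` of indices, not both
empty, `∏_{j∈J} ζ^{m_j} ≠ ∏_{l∈L} ζ^{m_l}`, and `ζ^{2 m_i} ≠ 1` for every `i`. -/
def Generic (ζ : ℂ) {n : ℕ} (m : Fin n → ℕ) : Prop :=
  (∀ J L : Finset (Fin n), Disjoint J L → (J.Nonempty ∨ L.Nonempty) →
    ∏ j ∈ J, ζ ^ m j ≠ ∏ l ∈ L, ζ ^ m l) ∧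
  ∀ i, ζ ^ (2 * m i) ≠ 1

open Finset

lemma sum_Icc_one_pow_eq_neg_one {R : Type*} [CommRing R] [IsDomain R] {w : R} (hw : w ≠ 1)
    {N : ℕ} (h : w ^ (N + 1) = 1) : ∑ k ∈ Icc 1 N, w ^ k = -1 := by
  have hgeom : ∑ k ∈ range (N + 1), w ^ k = 0 := by
    have := geom_sum_mul w (N + 1)
    rw [h, sub_self] at this
    exact (mul_eq_zero.1 this).resolve_right (sub_ne_zero.2 hw)
  rw [range_eq_Ico, sum_eq_sum_Ico_succ_bot (by positivity : 0 < N + 1), zero_add,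
    Ico_add_one_right_eq_Icc, pow_zero] at hgeom
  linear_combination hgeom

lemma prod_pow_add_pow_eq_sum_powerset {ι R : Type*} [CommSemiring R] [DecidableEq ι]
    (I : Finset ι) (x y : ι → R) (k : ℕ) :
    ∏ i ∈ I, (x i ^ k + y i ^ k) = ∑ S ∈ I.powerset, ((∏ i ∈ S, x i) * ∏ i ∈ I \ S, y i) ^ k := by
  simp_rw [prod_add, mul_pow, prod_pow]

lemma pow_prod_mul_prod_eq_one {ι M : Type*} [CommMonoid M] {x y : ι → M} {m : ℕ}
    (hx : ∀ i, x i ^ m = 1) (hy : ∀ i, y i ^ m = 1) (S T : Finset ι) :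
    ((∏ i ∈ S, x i) * ∏ i ∈ T, y i) ^ m = 1 := by
  simp [mul_pow, ← prod_pow, hx, hy]

lemma dvd_add_one_of_natCast_eq_neg_one {m N : ℕ} (h : (N : ZMod m) = -1) : m ∣ N + 1 :=
  (ZMod.natCast_eq_zero_iff _ _).1 (by push_cast [h]; ring)

lemma Generic.prod_mul_prod_inv_ne_one {ζ : ℂ} (hζ : ζ ≠ 0) {n : ℕ} {mm : Fin n → ℕ}
    (h : Generic ζ mm) {I S : Finset (Fin n)} (hI : I.Nonempty) (hS : S ⊆ I) :
    (∏ i ∈ S, ζ ^ mm i) * ∏ i ∈ I \ S, ζ⁻¹ ^ mm i ≠ 1 := by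
  intro hone
  have hne : S.Nonempty ∨ (I \ S).Nonempty := by
    rcases S.eq_empty_or_nonempty with rfl | hS'
    · exact Or.inr (by simpa using hI)
    · exact Or.inl hS'
  refine h.1 S (I \ S) disjoint_sdiff hne ?_
  simp_rw [inv_pow, prod_inv_distrib] at hone
  exact (mul_inv_eq_one₀ (prod_ne_zero_iff.2 fun i _ => pow_ne_zero _ hζ)).1 hone

theorem statement9_general {m : ℕ} {ζ : ℂ} (hζ : IsPrimitiveRoot ζ m)
    {n : ℕ} (mm : Fin n → ℕ) (hgen : Generic ζ mm)
    (I : Finset (Fin n)) (hI : I.Nonempty)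
    (N : ℕ) (hNm : (N : ZMod m) = -1) :
    ∑ k ∈ Finset.Icc 1 N, ∏ s ∈ I, (ζ ^ (k * mm s) + ζ⁻¹ ^ (k * mm s)) =
      -(2 ^ I.card : ℂ) := by
  obtain ⟨c, hc⟩ := dvd_add_one_of_natCast_eq_neg_one hNm
  have hζ0 : ζ ≠ 0 := hζ.ne_zero (ne_zero_of_dvd_ne_zero N.succ_ne_zero ⟨c, hc⟩)
  have hroot : ∀ z : ℂ, z ^ m = 1 → ∀ i, (z ^ mm i) ^ m = 1 := fun z hz i => by
    rw [pow_right_comm, hz, one_pow]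
  simp_rw [pow_mul', prod_pow_add_pow_eq_sum_powerset]
  rw [sum_comm]
  calc _ = ∑ S ∈ I.powerset, (-1 : ℂ) := sum_congr rfl fun S hS => by
        refine sum_Icc_one_pow_eq_neg_one
          (hgen.prod_mul_prod_inv_ne_one hζ0 hI (mem_powerset.1 hS)) ?_
        rw [hc, pow_mul, pow_prod_mul_prod_eq_one (hroot ζ hζ.pow_eq_one)
          (hroot ζ⁻¹ (by rw [inv_pow, hζ.pow_eq_one, inv_one])), one_pow]
    _ = -(2 ^ I.card : ℂ) := by simp

theorem statement9 {m : ℕ} {ζ : ℂ} (hζ : IsPrimitiveRoot ζ m)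
    {n : ℕ} (mm : Fin n → ℕ) (hgen : Generic ζ mm)
    (I : Finset (Fin n)) (hI : I.Nonempty)
    (N : ℕ) (hN : 0 < N) (hNm : (N : ZMod m) = -1) :
    ∑ k ∈ Finset.Icc 1 N, ∏ s ∈ I, (ζ ^ (k * mm s) + ζ⁻¹ ^ (k * mm s)) =
      -(2 ^ I.card : ℂ) :=
  statement9_general hζ mm hgen I hI N hNm
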